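/- Let ε(d,k) denote the infimum of d(P,Q) over all pairs of disjoint nonempty lattice polytopes P,Q contained in [0,k]^d. Then for every fixed k ≥ 1 and every d ≥ 2, ε(d,k) < ε(d−1,k); that is, ε(d,k) is strictly decreasing in d. -/

import Mathlib

/-!
Take disjoint lattice polytopes `P, Q ⊆ [0,k]^n` at distance `ε(n,k)` (there are only finitely
many lattice polytopes, so the minimum is attained) and closest points `p ∈ P`, `q ∈ Q`. As `p` is
a convex combination of the vertices of `P`, some vertex `w` has `⟪p - q, w - q⟫ ≥ ‖p - q‖² > 0`.
Place `P` and `Q` in the facet `x_{n+1} = 0` of `[0,k]^{n+1}` and replace `Q` by the pyramid over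
it with apex `(w, k)`. The pyramid meets that facet only in `Q`, so the pair stays disjoint, while
moving from `q` slightly towards the apex strictly decreases the distance to `p`.
-/

/-- A lattice (d,k)-polytope: the convex hull of a finite nonempty set of integer
points contained in the hypercube [0,k]^d. -/
def IsLatticePolytope (d k : ℕ) (P : Set (EuclideanSpace ℝ (Fin d))) : Prop :=
  ∃ V : Finset (EuclideanSpace ℝ (Fin d)), V.Nonempty ∧
    (∀ v ∈ V, ∀ i, (∃ z : ℤ, v i = z) ∧ 0 ≤ v i ∧ v i ≤ k) ∧
    P = convexHull ℝ (V : Set (EuclideanSpace ℝ (Fin d)))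

/-- ε(d,k): the smallest possible distance between two disjoint lattice
(d,k)-polytopes. -/
noncomputable def eps (d k : ℕ) : ℝ :=
  sInf {r | ∃ P Q : Set (EuclideanSpace ℝ (Fin d)),
    IsLatticePolytope d k P ∧ IsLatticePolytope d k Q ∧ P ∩ Q = ∅ ∧
    r = sInf (Set.image2 dist P Q)}

open Set

namespace EuclideanSpace

variable {n : ℕ}

def snoc (x : EuclideanSpace ℝ (Fin n)) (t : ℝ) : EuclideanSpace ℝ (Fin (n + 1)) :=
  WithLp.toLp 2 (Fin.snoc (α := fun _ ↦ ℝ) x.ofLp t)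

@[simp]
lemma snoc_castSucc (x : EuclideanSpace ℝ (Fin n)) (t : ℝ) (i : Fin n) :
    snoc x t i.castSucc = x i :=
  Fin.snoc_castSucc (α := fun _ ↦ ℝ) _ _ _

@[simp]
lemma snoc_last (x : EuclideanSpace ℝ (Fin n)) (t : ℝ) : snoc x t (Fin.last n) = t :=
  Fin.snoc_last (α := fun _ ↦ ℝ) _ _

lemma snoc_add_snoc (x y : EuclideanSpace ℝ (Fin n)) (s t : ℝ) :
    snoc x s + snoc y t = snoc (x + y) (s + t) := by
  ext i; induction i using Fin.lastCases <;> simp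

lemma snoc_sub_snoc (x y : EuclideanSpace ℝ (Fin n)) (s t : ℝ) :
    snoc x s - snoc y t = snoc (x - y) (s - t) := by
  ext i; induction i using Fin.lastCases <;> simp

lemma smul_snoc (c : ℝ) (x : EuclideanSpace ℝ (Fin n)) (t : ℝ) :
    c • snoc x t = snoc (c • x) (c * t) := by
  ext i; induction i using Fin.lastCases <;> simp

lemma inner_snoc_snoc (x y : EuclideanSpace ℝ (Fin n)) (s t : ℝ) :
    inner ℝ (snoc x s) (snoc y t) = inner ℝ x y + s * t := by
  simp [PiLp.inner_apply, Fin.sum_univ_castSucc, mul_comm]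

lemma norm_snoc_zero (x : EuclideanSpace ℝ (Fin n)) : ‖snoc x 0‖ = ‖x‖ := by
  rw [norm_eq_sqrt_real_inner, norm_eq_sqrt_real_inner, inner_snoc_snoc, mul_zero, add_zero]

def snocZero : EuclideanSpace ℝ (Fin n) →ₗᵢ[ℝ] EuclideanSpace ℝ (Fin (n + 1)) where
  toFun x := snoc x 0
  map_add' x y := by simp [snoc_add_snoc]
  map_smul' c x := by simp [smul_snoc]
  norm_map' := norm_snoc_zero

@[simp]
lemma snocZero_apply (x : EuclideanSpace ℝ (Fin n)) : snocZero x = snoc x 0 := rfl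

lemma image_snocZero_convexHull (s : Set (EuclideanSpace ℝ (Fin n))) :
    snocZero '' convexHull ℝ s = convexHull ℝ (snocZero '' s) :=
  snocZero.toLinearMap.image_convexHull s

end EuclideanSpace

section InnerProductSpace

variable {F : Type*} [NormedAddCommGroup F] [InnerProductSpace ℝ F]

lemma exists_mem_inner_ge_of_mem_convexHull {s : Set F} {x : F} (hx : x ∈ convexHull ℝ s)
    (u : F) : ∃ y ∈ s, inner ℝ u x ≤ inner ℝ u y :=
  ((innerₛₗ ℝ u).convexOn convex_univ).exists_ge_of_mem_convexHull (subset_univ s) hx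

lemma exists_mem_segment_dist_lt {p q a : F} (h : 0 < inner ℝ (p - q) (a - q)) :
    ∃ y ∈ segment ℝ q a, dist p y < dist p q := by
  set c := inner ℝ (p - q) (a - q)
  have hv : 0 < ‖a - q‖ ^ 2 := by
    have : a - q ≠ 0 := by rintro h0; simp [c, h0] at h
    positivity
  -- `t ≤ c / ‖a - q‖²` gives `‖(p - q) - t • (a - q)‖² ≤ ‖p - q‖² - t * c`
  set t := min 1 (c / ‖a - q‖ ^ 2)
  have ht : 0 < t := lt_min one_pos (by positivity)
  have htc : t * ‖a - q‖ ^ 2 ≤ c := (le_div_iff₀ hv).1 (min_le_right _ _)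
  refine ⟨q + t • (a - q), segment_eq_image' ℝ q a ▸ ⟨t, ⟨ht.le, min_le_left _ _⟩, rfl⟩, ?_⟩
  rw [dist_eq_norm, dist_eq_norm, ← sq_lt_sq₀ (norm_nonneg _) (norm_nonneg _),
    show p - (q + t • (a - q)) = (p - q) - t • (a - q) by abel, norm_sub_sq_real,
    real_inner_smul_right, norm_smul, mul_pow, Real.norm_eq_abs, sq_abs]
  nlinarith

end InnerProductSpace

section Distance

variable {X : Type*} [PseudoMetricSpace X] {P Q : Set X}

lemma sInf_image2_dist_le {x y : X} (hx : x ∈ P) (hy : y ∈ Q) :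
    sInf (image2 dist P Q) ≤ dist x y :=
  csInf_le ⟨0, by rintro _ ⟨a, -, b, -, rfl⟩; exact dist_nonneg⟩ (mem_image2_of_mem hx hy)

lemma IsCompact.exists_sInf_image2_dist_eq (hP : IsCompact P) (hQ : IsCompact Q)
    (hP' : P.Nonempty) (hQ' : Q.Nonempty) :
    ∃ p ∈ P, ∃ q ∈ Q, sInf (image2 dist P Q) = dist p q := by
  have hcompact : IsCompact (image2 dist P Q) := by
    rw [← image_prod]
    exact (hP.prod hQ).image continuous_dist
  obtain ⟨p, hp, q, hq, h⟩ := hcompact.sInf_mem (hP'.image2 hQ')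
  exact ⟨p, hp, q, hq, h.symm⟩

end Distance

open EuclideanSpace

def IsBoxLatticePoint {d : ℕ} (k : ℕ) (v : EuclideanSpace ℝ (Fin d)) : Prop :=
  ∀ i, (∃ z : ℤ, v i = z) ∧ 0 ≤ v i ∧ v i ≤ k

lemma finite_setOf_isBoxLatticePoint (d k : ℕ) :
    {v : EuclideanSpace ℝ (Fin d) | IsBoxLatticePoint k v}.Finite := by
  have hcoord : {x : ℝ | (∃ z : ℤ, x = z) ∧ 0 ≤ x ∧ x ≤ k}.Finite := by
    refine ((finite_Icc (0 : ℤ) k).image ((↑) : ℤ → ℝ)).subset ?_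
    rintro _ ⟨⟨z, rfl⟩, h0, hk⟩
    exact ⟨z, ⟨by exact_mod_cast h0, by exact_mod_cast hk⟩, rfl⟩
  exact ((Set.Finite.pi' fun _ ↦ hcoord).preimage
    (WithLp.ofLp_injective 2).injOn).subset fun v hv ↦ by simpa [IsBoxLatticePoint] using hv

lemma IsBoxLatticePoint.snoc {n k : ℕ} {v : EuclideanSpace ℝ (Fin n)} (hv : IsBoxLatticePoint k v)
    {t : ℝ} (ht : (∃ z : ℤ, t = z) ∧ 0 ≤ t ∧ t ≤ k) : IsBoxLatticePoint k (snoc v t) := by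
  intro i
  induction i using Fin.lastCases with
  | last => simpa using ht
  | cast j => simpa using hv j

namespace IsLatticePolytope

variable {d k : ℕ} {P : Set (EuclideanSpace ℝ (Fin d))}

lemma nonempty (hP : IsLatticePolytope d k P) : P.Nonempty := by
  obtain ⟨V, hV, -, rfl⟩ := hP
  exact convexHull_nonempty_iff.2 (by exact_mod_cast hV)

lemma isCompact (hP : IsLatticePolytope d k P) : IsCompact P := by
  obtain ⟨V, -, -, rfl⟩ := hP
  exact V.finite_toSet.isCompact_convexHull (𝕜 := ℝ)

lemma convex (hP : IsLatticePolytope d k P) : Convex ℝ P := by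
  obtain ⟨V, -, -, rfl⟩ := hP
  exact convex_convexHull ℝ _

end IsLatticePolytope

lemma isLatticePolytope_singleton {d k : ℕ} {v : EuclideanSpace ℝ (Fin d)}
    (hv : IsBoxLatticePoint k v) : IsLatticePolytope d k {v} := by
  classical
  exact ⟨{v}, Finset.singleton_nonempty v, by simpa [IsBoxLatticePoint] using hv, by simp⟩

def polytopeDistances (d k : ℕ) : Set ℝ :=
  {r | ∃ P Q : Set (EuclideanSpace ℝ (Fin d)),
    IsLatticePolytope d k P ∧ IsLatticePolytope d k Q ∧ P ∩ Q = ∅ ∧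
    r = sInf (image2 dist P Q)}

lemma eps_eq_sInf_polytopeDistances (d k : ℕ) : eps d k = sInf (polytopeDistances d k) := rfl

lemma polytopeDistances_finite (d k : ℕ) : (polytopeDistances d k).Finite := by
  let L := {v : EuclideanSpace ℝ (Fin d) | IsBoxLatticePoint k v}
  have hL : {A | A ⊆ L}.Finite := (finite_setOf_isBoxLatticePoint d k).finite_subsets
  refine ((hL.prod hL).image fun AB ↦
    sInf (image2 dist (convexHull ℝ AB.1) (convexHull ℝ AB.2))).subset ?_
  rintro _ ⟨_, _, ⟨V, -, hV, rfl⟩, ⟨W, -, hW, rfl⟩, -, rfl⟩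
  exact ⟨(V, W), ⟨fun v hv ↦ hV v hv, fun w hw ↦ hW w hw⟩, rfl⟩

lemma polytopeDistances_nonempty {d k : ℕ} (hd : 1 ≤ d) (hk : 1 ≤ k) :
    (polytopeDistances d k).Nonempty := by
  let c : EuclideanSpace ℝ (Fin d) := WithLp.toLp 2 fun _ ↦ (k : ℝ)
  have hc : c ≠ 0 := fun h ↦ by
    have : (k : ℝ) = 0 := congr($h ⟨0, hd⟩)
    norm_cast at this
    omega
  refine ⟨_, {0}, {c}, isLatticePolytope_singleton fun _ ↦ ⟨⟨0, by simp⟩, le_rfl, by positivity⟩,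
    isLatticePolytope_singleton fun _ ↦ ⟨⟨k, rfl⟩, by positivity, le_rfl⟩, ?_, rfl⟩
  simpa using hc

section Lift

variable {n k : ℕ}

lemma IsLatticePolytope.image_snocZero {P : Set (EuclideanSpace ℝ (Fin n))}
    (hP : IsLatticePolytope n k P) : IsLatticePolytope (n + 1) k (snocZero '' P) := by
  classical
  obtain ⟨V, hV, hVlat, rfl⟩ := hP
  refine ⟨V.image snocZero, hV.image _, ?_, by rw [Finset.coe_image, image_snocZero_convexHull]⟩
  simp only [Finset.mem_image]
  rintro _ ⟨v, hv, rfl⟩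
  exact IsBoxLatticePoint.snoc (hVlat v hv) ⟨⟨0, by simp⟩, le_rfl, by positivity⟩

lemma IsLatticePolytope.convexHull_insert_snoc {Q : Set (EuclideanSpace ℝ (Fin n))}
    (hQ : IsLatticePolytope n k Q) {w : EuclideanSpace ℝ (Fin n)} (hw : IsBoxLatticePoint k w) :
    IsLatticePolytope (n + 1) k (convexHull ℝ (insert (snoc w k) (snocZero '' Q))) := by
  classical
  obtain ⟨W, -, hWlat, rfl⟩ := hQ
  refine ⟨insert (snoc w k) (W.image snocZero), Finset.insert_nonempty _ _, ?_, ?_⟩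
  · simp only [Finset.mem_insert, Finset.mem_image]
    rintro _ (rfl | ⟨v, hv, rfl⟩)
    · exact hw.snoc ⟨⟨k, rfl⟩, by positivity, le_rfl⟩
    · exact IsBoxLatticePoint.snoc (hWlat v hv) ⟨⟨0, by simp⟩, le_rfl, by positivity⟩
  · rw [Finset.coe_insert, Finset.coe_image, image_snocZero_convexHull, insert_eq, insert_eq,
      convexHull_convexHull_union_right]

lemma mem_image_snocZero_of_mem_convexHull_insert {s : Set (EuclideanSpace ℝ (Fin n))}
    (hs : Convex ℝ s) (hs' : s.Nonempty) {a : EuclideanSpace ℝ (Fin n)} {t : ℝ} (ht : t ≠ 0)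
    {x : EuclideanSpace ℝ (Fin (n + 1))} (hx : x ∈ convexHull ℝ (insert (snoc a t) (snocZero '' s)))
    (hx0 : x (Fin.last n) = 0) : x ∈ snocZero '' s := by
  rw [convexHull_insert (hs'.image _), ← image_snocZero_convexHull,
    hs.convexHull_eq, mem_convexJoin] at hx
  obtain ⟨_, rfl, b, hb, μ, ν, -, -, hμν, rfl⟩ := hx
  obtain ⟨y, hy, rfl⟩ := hb
  have hμ : μ = 0 := by simpa [ht] using hx0
  obtain rfl : ν = 1 := by linarith
  simpa [hμ] using mem_image_of_mem snocZero hy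

lemma image_snocZero_inter_convexHull_insert_eq_empty {P Q : Set (EuclideanSpace ℝ (Fin n))}
    (hPQ : P ∩ Q = ∅) (hQ : Convex ℝ Q) (hQ' : Q.Nonempty) (a : EuclideanSpace ℝ (Fin n))
    {t : ℝ} (ht : t ≠ 0) :
    snocZero '' P ∩ convexHull ℝ (insert (snoc a t) (snocZero '' Q)) = ∅ := by
  refine eq_empty_iff_forall_notMem.2 ?_
  rintro _ ⟨⟨p, hp, rfl⟩, hx⟩
  obtain ⟨q, hq, hqp⟩ := mem_image_snocZero_of_mem_convexHull_insert hQ hQ' ht hx (by simp)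
  rw [snocZero.injective hqp] at hq
  exact hPQ.subset ⟨hp, hq⟩

lemma exists_lift_dist_lt (hk : 1 ≤ k) {P Q : Set (EuclideanSpace ℝ (Fin n))}
    (hP : IsLatticePolytope n k P) (hQ : IsLatticePolytope n k Q) (hPQ : P ∩ Q = ∅)
    {p q : EuclideanSpace ℝ (Fin n)} (hp : p ∈ P) (hq : q ∈ Q) :
    ∃ P' Q', IsLatticePolytope (n + 1) k P' ∧ IsLatticePolytope (n + 1) k Q' ∧ P' ∩ Q' = ∅ ∧
      ∃ x ∈ P', ∃ y ∈ Q', dist x y < dist p q := by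
  have hpq : p - q ≠ 0 := sub_ne_zero.2 fun h ↦ hPQ.subset ⟨hp, h ▸ hq⟩
  obtain ⟨V, -, hVlat, rfl⟩ := id hP
  obtain ⟨w, hwV, hw⟩ := exists_mem_inner_ge_of_mem_convexHull hp (p - q)
  have hinner : 0 < inner ℝ (snocZero p - snocZero q) (snoc w k - snocZero q) := by
    have : 0 < inner ℝ (p - q) (p - q) := real_inner_self_pos.2 hpq
    simp only [snocZero_apply, snoc_sub_snoc, inner_snoc_snoc, inner_sub_right] at this ⊢
    linarith
  obtain ⟨y, hy, hdist⟩ := exists_mem_segment_dist_lt hinner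
  refine ⟨_, _, hP.image_snocZero, hQ.convexHull_insert_snoc (hVlat w hwV),
    image_snocZero_inter_convexHull_insert_eq_empty hPQ hQ.convex hQ.nonempty w
      (by exact_mod_cast (by omega : k ≠ 0)),
    snocZero p, mem_image_of_mem _ hp, y, ?_, by rwa [snocZero.dist_map] at hdist⟩
  exact (convex_convexHull ℝ _).segment_subset
    (subset_convexHull ℝ _ (mem_insert_of_mem _ (mem_image_of_mem _ hq)))
    (subset_convexHull ℝ _ (mem_insert _ _)) hy

end Lift

theorem eps_succ_lt {n k : ℕ} (hn : 1 ≤ n) (hk : 1 ≤ k) : eps (n + 1) k < eps n k := by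
  obtain ⟨P, Q, hP, hQ, hPQ, hPQeps⟩ :=
    (polytopeDistances_nonempty hn hk).csInf_mem (polytopeDistances_finite n k)
  obtain ⟨p, hp, q, hq, hpq⟩ :=
    hP.isCompact.exists_sInf_image2_dist_eq hQ.isCompact hP.nonempty hQ.nonempty
  obtain ⟨P', Q', hP', hQ', hPQ', x, hx, y, hy, hxy⟩ := exists_lift_dist_lt hk hP hQ hPQ hp hq
  calc eps (n + 1) k ≤ sInf (image2 dist P' Q') :=
        csInf_le (polytopeDistances_finite _ _).bddBelow ⟨P', Q', hP', hQ', hPQ', rfl⟩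
    _ ≤ dist x y := sInf_image2_dist_le hx hy
    _ < dist p q := hxy
    _ = eps n k := by rw [eps_eq_sInf_polytopeDistances, hPQeps, hpq]

theorem stmt_6 (k : ℕ) (hk : 1 ≤ k) (d : ℕ) (hd : 2 ≤ d) :
    eps d k < eps (d - 1) k := by
  obtain ⟨n, rfl⟩ : ∃ n, d = n + 1 := ⟨d - 1, by omega⟩
  exact eps_succ_lt (by omega) hk
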